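/- arXiv:1703.02709 — 10 statements merged into one kernel-verified Lean document; each statement's English description precedes it below -/
import Mathlib

section
/- Let u₁, u₂ ∈ ℝ² satisfy ‖u₁‖ ≤ ‖u₂‖ and |⟨u₁, u₂⟩| ≤ (1/2)·‖u₁‖². Then for all real numbers x₁, x₂ one has ‖x₁·u₁ + x₂·u₂‖ ≥ (1/2)·(|x₁|·‖u₁‖ + |x₂|·‖u₂‖). -/
open scoped RealInnerProductSpace

/-- For an almost orthogonal pair `(u₁, u₂)` in `ℝ²`
(`‖u₁‖ ≤ ‖u₂‖` and `|⟪u₁, u₂⟫| ≤ ‖u₁‖²/2`), every real combination satisfies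
`‖x₁·u₁ + x₂·u₂‖ ≥ (|x₁|·‖u₁‖ + |x₂|·‖u₂‖)/2`. -/
theorem almost_orthogonal_lower_bound
    (u₁ u₂ : EuclideanSpace ℝ (Fin 2))
    (h₁ : ‖u₁‖ ≤ ‖u₂‖) (h₂ : |⟪u₁, u₂⟫| ≤ (1 / 2) * ‖u₁‖ ^ 2) :
    ∀ x₁ x₂ : ℝ, ‖x₁ • u₁ + x₂ • u₂‖ ≥ (1 / 2) * (|x₁| * ‖u₁‖ + |x₂| * ‖u₂‖) := by
  intro x₁ x₂
  have hsq : ‖x₁ • u₁ + x₂ • u₂‖ ^ 2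
      = x₁ ^ 2 * ‖u₁‖ ^ 2 + 2 * (x₁ * x₂ * ⟪u₁, u₂⟫) + x₂ ^ 2 * ‖u₂‖ ^ 2 := by
    rw [norm_add_sq_real, inner_smul_left, inner_smul_right, norm_smul, norm_smul]
    simp [mul_pow]
    ring
  have habs := abs_le.mp h₂
  have ha : (0:ℝ) ≤ ‖u₁‖ := norm_nonneg _
  have hb : (0:ℝ) ≤ ‖u₂‖ := norm_nonneg _
  have hN : (0:ℝ) ≤ ‖x₁ • u₁ + x₂ • u₂‖ := norm_nonneg _
  have hx1 : |x₁| ^ 2 = x₁ ^ 2 := sq_abs x₁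
  have hx2 : |x₂| ^ 2 = x₂ ^ 2 := sq_abs x₂
  have hxm : x₁ * x₂ ≤ |x₁| * |x₂| := by
    calc x₁ * x₂ ≤ |x₁ * x₂| := le_abs_self _
    _ = |x₁| * |x₂| := abs_mul _ _
  have hxm' : -(|x₁| * |x₂|) ≤ x₁ * x₂ := by
    have := neg_abs_le (x₁ * x₂)
    rwa [abs_mul] at this
  have hx1n : (0:ℝ) ≤ |x₁| := abs_nonneg _
  have hx2n : (0:ℝ) ≤ |x₂| := abs_nonneg _
  have key : ((1 / 2) * (|x₁| * ‖u₁‖ + |x₂| * ‖u₂‖)) ^ 2 ≤ ‖x₁ • u₁ + x₂ • u₂‖ ^ 2 := by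
    rw [hsq]
    nlinarith [sq_nonneg (|x₁| * ‖u₁‖ - |x₂| * ‖u₂‖), mul_nonneg hx1n hx2n,
      mul_nonneg (mul_nonneg hx1n hx2n) ha, mul_nonneg (mul_nonneg hx1n hx2n) hb,
      mul_le_mul_of_nonneg_left h₁ (mul_nonneg (mul_nonneg hx1n hx2n) ha),
      sq_nonneg (x₁ * x₂)]
  nlinarith [key, mul_nonneg ha hx1n, mul_nonneg hb hx2n]
end

section
/- Let q be a positive integer, m a positive real number, and a, b real numbers with |a| < q/2 and |b| < q/2. Let u₀, u₁, u₂ ∈ ℝ² with ‖u₀‖ ≤ ‖u₂‖ and ‖u₁‖ ≥ 1, ‖u₂‖ ≥ 1. Define F(x₁, x₂) := m/q² − ‖u₀ + x₁·u₁ + x₂·u₂ + (a/q, b/q)‖². Then for all real numbers x₁, x₂ with |x₁| ≤ √m/(2q·‖u₁‖) − 1 and |x₂| ≤ √m/(2q·‖u₂‖) − 1, one has F(x₁, x₂) > 0. -/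
/-- Positivity half of the box lemma: the value
`F(x₁,x₂) = m/q² − ‖u₀ + x₁u₁ + x₂u₂ + (a/q, b/q)‖²` is positive on the box
`|x₁| ≤ √m/(2q‖u₁‖) − 1`, `|x₂| ≤ √m/(2q‖u₂‖) − 1`. -/
theorem box_lemma_positive
    (q : ℕ) (hq : 0 < q) (m : ℝ) (hm : 0 < m) (a b : ℝ)
    (ha : |a| < q / 2) (hb : |b| < q / 2)
    (u₀ u₁ u₂ : EuclideanSpace ℝ (Fin 2))
    (h₀ : ‖u₀‖ ≤ ‖u₂‖) (h₁ : 1 ≤ ‖u₁‖) (h₂ : 1 ≤ ‖u₂‖) :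
    ∀ x₁ x₂ : ℝ, |x₁| ≤ Real.sqrt m / (2 * q * ‖u₁‖) - 1 →
      |x₂| ≤ Real.sqrt m / (2 * q * ‖u₂‖) - 1 →
      0 < m / q ^ 2 - ‖u₀ + x₁ • u₁ + x₂ • u₂ + (WithLp.equiv 2 (Fin 2 → ℝ)).symm ![a / q, b / q]‖ ^ 2 := by
  intro x₁ x₂ hx₁ hx₂
  set v := (WithLp.equiv 2 (Fin 2 → ℝ)).symm ![a / q, b / q] with hvdef
  have hqR : (0:ℝ) < q := by exact_mod_cast hq
  have hu₁ : (0:ℝ) < ‖u₁‖ := lt_of_lt_of_le one_pos h₁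
  have hu₂ : (0:ℝ) < ‖u₂‖ := lt_of_lt_of_le one_pos h₂
  have hs : (0:ℝ) ≤ Real.sqrt m := Real.sqrt_nonneg m
  have hsq : Real.sqrt m ^ 2 = m := Real.sq_sqrt hm.le
  -- norm of v
  have hv2 : ‖v‖ ^ 2 = (a / q) ^ 2 + (b / q) ^ 2 := by
    have : ‖v‖ = Real.sqrt ((a / q) ^ 2 + (b / q) ^ 2) := by
      rw [hvdef, EuclideanSpace.norm_eq]
      simp [Fin.sum_univ_two, sq_abs]
    rw [this, Real.sq_sqrt (by positivity)]
  have haq : |a / q| < 1 / 2 := by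
    rw [abs_div, abs_of_pos hqR, div_lt_iff₀ hqR]; linarith
  have hbq : |b / q| < 1 / 2 := by
    rw [abs_div, abs_of_pos hqR, div_lt_iff₀ hqR]; linarith
  have hv : ‖v‖ < 1 := by
    nlinarith [norm_nonneg v, abs_nonneg (a / q), abs_nonneg (b / q), sq_abs (a / q), sq_abs (b / q)]
  -- bounds on scaled terms
  have hb₁ : |x₁| * ‖u₁‖ ≤ Real.sqrt m / (2 * q) - ‖u₁‖ := by
    have := mul_le_mul_of_nonneg_right hx₁ hu₁.le
    have key : (Real.sqrt m / (2 * q * ‖u₁‖) - 1) * ‖u₁‖ = Real.sqrt m / (2 * q) - ‖u₁‖ := by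
      field_simp
    linarith [key ▸ this]
  have hb₂ : |x₂| * ‖u₂‖ ≤ Real.sqrt m / (2 * q) - ‖u₂‖ := by
    have := mul_le_mul_of_nonneg_right hx₂ hu₂.le
    have key : (Real.sqrt m / (2 * q * ‖u₂‖) - 1) * ‖u₂‖ = Real.sqrt m / (2 * q) - ‖u₂‖ := by
      field_simp
    linarith [key ▸ this]
  -- triangle inequality
  have htri : ‖u₀ + x₁ • u₁ + x₂ • u₂ + v‖ ≤ ‖u₀‖ + |x₁| * ‖u₁‖ + |x₂| * ‖u₂‖ + ‖v‖ := by
    calc ‖u₀ + x₁ • u₁ + x₂ • u₂ + v‖ ≤ ‖u₀ + x₁ • u₁ + x₂ • u₂‖ + ‖v‖ := norm_add_le _ _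
      _ ≤ ‖u₀ + x₁ • u₁‖ + ‖x₂ • u₂‖ + ‖v‖ := by linarith [norm_add_le (u₀ + x₁ • u₁) (x₂ • u₂)]
      _ ≤ ‖u₀‖ + ‖x₁ • u₁‖ + ‖x₂ • u₂‖ + ‖v‖ := by linarith [norm_add_le u₀ (x₁ • u₁)]
      _ = ‖u₀‖ + |x₁| * ‖u₁‖ + |x₂| * ‖u₂‖ + ‖v‖ := by
          simp [norm_smul, Real.norm_eq_abs]
  have hlt : ‖u₀ + x₁ • u₁ + x₂ • u₂ + v‖ < Real.sqrt m / q := by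
    have : ‖u₀‖ + |x₁| * ‖u₁‖ + |x₂| * ‖u₂‖ + ‖v‖ < Real.sqrt m / q := by
      have : Real.sqrt m / (2 * q) + Real.sqrt m / (2 * q) = Real.sqrt m / q := by
        field_simp; ring
      linarith
    linarith
  have hnn : (0:ℝ) ≤ ‖u₀ + x₁ • u₁ + x₂ • u₂ + v‖ := norm_nonneg _
  have hsqlt : ‖u₀ + x₁ • u₁ + x₂ • u₂ + v‖ ^ 2 < (Real.sqrt m / q) ^ 2 := by
    apply sq_lt_sq' _ hlt
    linarith [div_nonneg hs hqR.le]
  have : (Real.sqrt m / q) ^ 2 = m / q ^ 2 := by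
    rw [div_pow, hsq]
  linarith [this ▸ hsqlt]
end

section
/- Let q be a positive integer, m a positive real number, and a, b real numbers with |a| < q/2 and |b| < q/2. Let u₀, u₁, u₂ ∈ ℝ² with ‖u₀‖ ≤ ‖u₂‖, ‖u₁‖ ≤ ‖u₂‖ and |⟨u₁, u₂⟩| ≤ (1/2)·‖u₁‖². Define F(x₁, x₂) := m/q² − ‖u₀ + x₁·u₁ + x₂·u₂ + (a/q, b/q)‖². Then for all real numbers x₁, x₂ with (|x₁|/2)·‖u₁‖ + (|x₂|/2 − 1)·‖u₂‖ ≥ √m/q + 1, one has F(x₁, x₂) < 0. -/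
open scoped RealInnerProductSpace

private lemma box_aux (s t A B c : ℝ) (hs : 0 ≤ s) (ht : 0 ≤ t) (hA : 0 ≤ A)
    (hAB : A ≤ B) (hc : -((s * A) * (t * B)) ≤ c) :
    (s / 2 * A + t / 2 * B) ^ 2 ≤ s ^ 2 * A ^ 2 + c + t ^ 2 * B ^ 2 := by
  nlinarith [sq_nonneg (s * A - t * B)]

set_option maxHeartbeats 1000000

/-- Negativity half of the box lemma: for an almost orthogonal pair
`(u₁, u₂)`, the value `F(x₁,x₂) = m/q² − ‖u₀ + x₁u₁ + x₂u₂ + (a/q, b/q)‖²` is negative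
whenever `(|x₁|/2)‖u₁‖ + (|x₂|/2 − 1)‖u₂‖ ≥ √m/q + 1`. -/
theorem box_lemma_negative
    (q : ℕ) (hq : 0 < q) (m : ℝ) (hm : 0 < m) (a b : ℝ)
    (ha : |a| < q / 2) (hb : |b| < q / 2)
    (u₀ u₁ u₂ : EuclideanSpace ℝ (Fin 2))
    (h₀ : ‖u₀‖ ≤ ‖u₂‖) (h₁ : ‖u₁‖ ≤ ‖u₂‖)
    (h₂ : |⟪u₁, u₂⟫| ≤ (1 / 2) * ‖u₁‖ ^ 2) :
    ∀ x₁ x₂ : ℝ,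
      (|x₁| / 2) * ‖u₁‖ + (|x₂| / 2 - 1) * ‖u₂‖ ≥ Real.sqrt m / q + 1 →
      m / q ^ 2 - ‖u₀ + x₁ • u₁ + x₂ • u₂ + (WithLp.equiv 2 (Fin 2 → ℝ)).symm ![a / q, b / q]‖ ^ 2 < 0 := by
  intro x₁ x₂ hx
  set w : EuclideanSpace ℝ (Fin 2) := (WithLp.equiv 2 (Fin 2 → ℝ)).symm ![a / q, b / q] with hw
  have hq0 : (0:ℝ) < q := by exact_mod_cast hq
  -- ‖w‖ < 1
  have hwn : ‖w‖ < 1 := by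
    have hwsq : ‖w‖ ^ 2 = (a / q) ^ 2 + (b / q) ^ 2 := by
      rw [hw, EuclideanSpace.norm_eq, Real.sq_sqrt (by positivity)]
      simp [Fin.sum_univ_two, sq_abs]
    have ha2 : (a / q) ^ 2 < 1 / 2 := by
      rw [div_pow, div_lt_iff₀ (by positivity)]
      nlinarith [sq_abs a, abs_nonneg a]
    have hb2 : (b / q) ^ 2 < 1 / 2 := by
      rw [div_pow, div_lt_iff₀ (by positivity)]
      nlinarith [sq_abs b, abs_nonneg b]
    nlinarith [norm_nonneg w]
  -- key lower bound on ‖x₁ • u₁ + x₂ • u₂‖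
  set A := ‖u₁‖ with hA
  set B := ‖u₂‖ with hB
  have hA0 : 0 ≤ A := norm_nonneg _
  have hB0 : 0 ≤ B := norm_nonneg _
  have hexp : ‖x₁ • u₁ + x₂ • u₂‖ ^ 2
      = x₁ ^ 2 * A ^ 2 + 2 * (x₁ * x₂) * ⟪u₁, u₂⟫ + x₂ ^ 2 * B ^ 2 := by
    rw [norm_add_sq_real, norm_smul, norm_smul, real_inner_smul_left, real_inner_smul_right]
    simp [mul_pow, sq_abs]
    ring
  have hkey : (|x₁| / 2) * A + (|x₂| / 2) * B ≤ ‖x₁ • u₁ + x₂ • u₂‖ := by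
    have h1 : ((|x₁| / 2) * A + (|x₂| / 2) * B) ^ 2 ≤ ‖x₁ • u₁ + x₂ • u₂‖ ^ 2 := by
      rw [hexp]
      have habs : |x₁ * x₂ * ⟪u₁, u₂⟫| ≤ |x₁| * |x₂| * ((1/2) * A ^ 2) := by
        rw [abs_mul, abs_mul]
        exact mul_le_mul_of_nonneg_left h₂ (by positivity)
      have h12 : |x₂| * A ≤ |x₂| * B := mul_le_mul_of_nonneg_left h₁ (abs_nonneg _)
      have h2x : -((|x₁| * A) * (|x₂| * B)) ≤ 2 * (x₁ * x₂) * ⟪u₁, u₂⟫ := by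
        have hna : -|x₁ * x₂ * ⟪u₁, u₂⟫| ≤ x₁ * x₂ * ⟪u₁, u₂⟫ := neg_abs_le _
        nlinarith [mul_le_mul_of_nonneg_left h12 (mul_nonneg (abs_nonneg x₁) hA0)]
      have := box_aux |x₁| |x₂| A B (2 * (x₁ * x₂) * ⟪u₁, u₂⟫) (abs_nonneg _) (abs_nonneg _)
        hA0 h₁ h2x
      calc (|x₁| / 2 * A + |x₂| / 2 * B) ^ 2
          ≤ |x₁| ^ 2 * A ^ 2 + 2 * (x₁ * x₂) * ⟪u₁, u₂⟫ + |x₂| ^ 2 * B ^ 2 := this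
        _ = x₁ ^ 2 * A ^ 2 + 2 * (x₁ * x₂) * ⟪u₁, u₂⟫ + x₂ ^ 2 * B ^ 2 := by
            rw [sq_abs, sq_abs]
    have h2 : (0:ℝ) ≤ (|x₁| / 2) * A + (|x₂| / 2) * B := by positivity
    nlinarith [norm_nonneg (x₁ • u₁ + x₂ • u₂)]
  -- triangle inequality
  set v := u₀ + x₁ • u₁ + x₂ • u₂ + w with hv
  have htri : ‖x₁ • u₁ + x₂ • u₂‖ - ‖u₀‖ - ‖w‖ ≤ ‖v‖ := by
    have : ‖x₁ • u₁ + x₂ • u₂‖ = ‖v - u₀ - w‖ := by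
      congr 1; rw [hv]; abel
    calc ‖x₁ • u₁ + x₂ • u₂‖ - ‖u₀‖ - ‖w‖ = ‖v - u₀ - w‖ - ‖u₀‖ - ‖w‖ := by rw [this]
      _ ≤ (‖v - u₀‖ + ‖w‖) - ‖u₀‖ - ‖w‖ := by
          have := norm_sub_le (v - u₀) w
          linarith [norm_sub_le (v - u₀) w]
      _ = ‖v - u₀‖ - ‖u₀‖ := by ring
      _ ≤ ‖v‖ := by linarith [norm_sub_le v u₀]
  have hsm : Real.sqrt m / q < ‖v‖ := by
    have : Real.sqrt m / q + 1 ≤ (|x₁| / 2) * A + (|x₂| / 2) * B - B := by linarith [hx]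
    nlinarith [htri, hkey, h₀, hwn]
  have hsm0 : (0:ℝ) ≤ Real.sqrt m / q := by positivity
  have : m / q ^ 2 < ‖v‖ ^ 2 := by
    have h : (Real.sqrt m / q) ^ 2 = m / q ^ 2 := by
      rw [div_pow, Real.sq_sqrt hm.le]
    nlinarith [hsm, hsm0]
  linarith
end

section
/- Let q be a positive real number and let u₁ = (u₁₁, u₁₂), u₂ = (u₂₁, u₂₂) ∈ ℝ² satisfy |u₁₁·u₂₂ − u₁₂·u₂₁| = q, ‖u₁‖ ≤ ‖u₂‖ and |⟨u₁, u₂⟩| ≤ (1/2)·‖u₁‖². Then ‖u₁‖·‖u₂‖ ≤ 2q/√3. -/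
open scoped RealInnerProductSpace

/-- An almost orthogonal pair spanning a lattice of covolume `q`
satisfies `‖u₁‖·‖u₂‖ ≤ 2q/√3`. -/
theorem almost_orthogonal_covolume_bound
    (q : ℝ) (hq : 0 < q) (u₁ u₂ : EuclideanSpace ℝ (Fin 2))
    (hdet : |u₁ 0 * u₂ 1 - u₁ 1 * u₂ 0| = q)
    (h₁ : ‖u₁‖ ≤ ‖u₂‖) (h₂ : |⟪u₁, u₂⟫| ≤ (1 / 2) * ‖u₁‖ ^ 2) :
    ‖u₁‖ * ‖u₂‖ ≤ 2 * q / Real.sqrt 3 := by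
  have hn1 : ‖u₁‖ ^ 2 = u₁ 0 ^ 2 + u₁ 1 ^ 2 := by
    rw [EuclideanSpace.norm_eq, Real.sq_sqrt (by positivity)]
    simp [Fin.sum_univ_two, sq_abs]
  have hn2 : ‖u₂‖ ^ 2 = u₂ 0 ^ 2 + u₂ 1 ^ 2 := by
    rw [EuclideanSpace.norm_eq, Real.sq_sqrt (by positivity)]
    simp [Fin.sum_univ_two, sq_abs]
  have hip : ⟪u₁, u₂⟫ = u₁ 0 * u₂ 0 + u₁ 1 * u₂ 1 := by
    simp [PiLp.inner_apply, Fin.sum_univ_two, mul_comm]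
  have hq2 : q ^ 2 = ‖u₁‖ ^ 2 * ‖u₂‖ ^ 2 - ⟪u₁, u₂⟫ ^ 2 := by
    rw [← hdet, sq_abs, hn1, hn2, hip]; ring
  have hc2 : ⟪u₁, u₂⟫ ^ 2 ≤ ((1 / 2) * ‖u₁‖ ^ 2) ^ 2 := by
    have := sq_abs ⟪u₁, u₂⟫
    nlinarith [abs_nonneg ⟪u₁, u₂⟫]
  have h1n : (0 : ℝ) ≤ ‖u₁‖ := norm_nonneg _
  have h2n : (0 : ℝ) ≤ ‖u₂‖ := norm_nonneg _
  have hkey : 3 * (‖u₁‖ * ‖u₂‖) ^ 2 ≤ 4 * q ^ 2 := by nlinarith [mul_self_le_mul_self h1n h₁, sq_nonneg ‖u₁‖]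
  have hs : Real.sqrt 3 ^ 2 = 3 := Real.sq_sqrt (by norm_num)
  have hsp : (0 : ℝ) < Real.sqrt 3 := Real.sqrt_pos.mpr (by norm_num)
  rw [le_div_iff₀ hsp]
  nlinarith [mul_nonneg h1n h2n, sq_nonneg (‖u₁‖ * ‖u₂‖ * Real.sqrt 3 - 2 * q)]
end

section
/- Let q be a prime and a, b integers not both divisible by q. If v = (v₁, v₂) and w = (w₁, w₂) are elements of ℤ × ℤ with q dividing a·v₁ + b·v₂ and q dividing a·w₁ + b·w₂, and v₁·w₂ − v₂·w₁ ≠ 0, then (v₁² + v₂²)·(w₁² + w₂²) ≥ q². -/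
/-- Two `ℤ`-linearly independent vectors of the index-`q` congruence
lattice `{(x, y) : q ∣ a·x + b·y}` have product of squared Euclidean norms at least `q²`. -/
theorem congruence_lattice_independent_vectors
    (q : ℕ) (hq : q.Prime) (a b : ℤ) (hab : ¬ ((q : ℤ) ∣ a ∧ (q : ℤ) ∣ b))
    (v₁ v₂ w₁ w₂ : ℤ)
    (hv : (q : ℤ) ∣ a * v₁ + b * v₂) (hw : (q : ℤ) ∣ a * w₁ + b * w₂)
    (hind : v₁ * w₂ - v₂ * w₁ ≠ 0) :
    (v₁ ^ 2 + v₂ ^ 2) * (w₁ ^ 2 + w₂ ^ 2) ≥ (q : ℤ) ^ 2 := by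
  set D : ℤ := v₁ * w₂ - v₂ * w₁ with hDdef
  have hqp : Prime (q : ℤ) := Nat.prime_iff_prime_int.mp hq
  have haD : (q : ℤ) ∣ a * D := by
    have : a * D = (a * v₁ + b * v₂) * w₂ - (a * w₁ + b * w₂) * v₂ := by ring
    rw [this]; exact dvd_sub (hv.mul_right _) (hw.mul_right _)
  have hbD : (q : ℤ) ∣ b * D := by
    have : b * D = (a * w₁ + b * w₂) * v₁ - (a * v₁ + b * v₂) * w₁ := by ring
    rw [this]; exact dvd_sub (hw.mul_right _) (hv.mul_right _)
  have hD : (q : ℤ) ∣ D := by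
    rcases hqp.dvd_or_dvd haD with h | h
    · rcases hqp.dvd_or_dvd hbD with h2 | h2
      · exact absurd ⟨h, h2⟩ hab
      · exact h2
    · exact h
  obtain ⟨k, hk⟩ := hD
  have hk0 : k ≠ 0 := by rintro rfl; simp at hk; exact hind hk
  have hk1 : 1 ≤ k ^ 2 := by
    have := hk0; nlinarith [sq_nonneg k, sq_nonneg (k - 1), sq_nonneg (k + 1),
      Int.one_le_abs (show k ≠ 0 from hk0), sq_abs k]
  have hD2 : (q : ℤ) ^ 2 ≤ D ^ 2 := by
    rw [hk]; nlinarith [sq_nonneg ((q : ℤ) * k), sq_nonneg (q : ℤ)]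
  have key : (v₁ ^ 2 + v₂ ^ 2) * (w₁ ^ 2 + w₂ ^ 2) = (v₁ * w₁ + v₂ * w₂) ^ 2 + D ^ 2 := by
    rw [hDdef]; ring
  nlinarith [sq_nonneg (v₁ * w₁ + v₂ * w₂)]
end

section
/- Let q be a prime, a, b integers not both divisible by q, and L := {(x, y) ∈ ℤ × ℤ : q divides a·x + b·y}. Suppose v = (v₁, v₂) ∈ L satisfies 0 < v₁² + v₂² ≤ q/4 and v has minimal Euclidean norm among the nonzero elements of L. Then gcd(v₁, v₂) = 1, and every nonzero w ∈ L with ‖w‖ ≤ ‖v‖ satisfies w = v or w = −v. -/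
/-!
Two lattice vectors `v, w` are both orthogonal modulo `q` to `(a, b)`, which is nonzero modulo `q`,
so `q` divides their determinant `v₁ w₂ - v₂ w₁`. By the Lagrange identity the square of that
determinant is at most `‖v‖² ‖w‖² < q²`, so it vanishes: `w` is parallel to `v`, hence a multiple
`k v` once `v` is primitive, and `‖w‖ = ‖v‖` forces `k = ±1`. Primitivity comes from minimality:
`g = gcd(v₁, v₂)` satisfies `g² ≤ ‖v‖² < q²`, so `q ∤ g` and `v / g` is again a lattice vector.
-/

theorem Int.eq_zero_of_dvd_of_sq_lt_sq {p x : ℤ} (h : p ∣ x) (hx : x ^ 2 < p ^ 2) : x = 0 :=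
  Int.eq_zero_of_abs_lt_dvd ((abs_dvd p x).mpr h) (sq_lt_sq.mp hx)

theorem sq_cross_le_mul_sqNorm {R : Type*} [CommRing R] [LinearOrder R] [IsStrictOrderedRing R]
    (v₁ v₂ w₁ w₂ : R) :
    (v₁ * w₂ - v₂ * w₁) ^ 2 ≤ (v₁ ^ 2 + v₂ ^ 2) * (w₁ ^ 2 + w₂ ^ 2) := by
  have lagrange : (v₁ ^ 2 + v₂ ^ 2) * (w₁ ^ 2 + w₂ ^ 2)
      = (v₁ * w₂ - v₂ * w₁) ^ 2 + (v₁ * w₁ + v₂ * w₂) ^ 2 := by ring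
  rw [lagrange]
  exact le_add_of_nonneg_right (sq_nonneg _)

theorem Prime.dvd_cross_of_dvd_dot {R : Type*} [CommRing R] {p a b v₁ v₂ w₁ w₂ : R}
    (hp : Prime p) (hab : ¬ (p ∣ a ∧ p ∣ b)) (hv : p ∣ a * v₁ + b * v₂)
    (hw : p ∣ a * w₁ + b * w₂) : p ∣ v₁ * w₂ - v₂ * w₁ := by
  have ha : p ∣ a * (v₁ * w₂ - v₂ * w₁) := by
    have h : a * (v₁ * w₂ - v₂ * w₁) = w₂ * (a * v₁ + b * v₂) - v₂ * (a * w₁ + b * w₂) := by ring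
    exact h ▸ dvd_sub (hv.mul_left _) (hw.mul_left _)
  have hb : p ∣ b * (v₁ * w₂ - v₂ * w₁) := by
    have h : b * (v₁ * w₂ - v₂ * w₁) = v₁ * (a * w₁ + b * w₂) - w₁ * (a * v₁ + b * v₂) := by ring
    exact h ▸ dvd_sub (hw.mul_left _) (hv.mul_left _)
  by_contra h
  exact hab ⟨(hp.dvd_or_dvd ha).resolve_right h, (hp.dvd_or_dvd hb).resolve_right h⟩

theorem IsCoprime.exists_eq_mul_of_cross_eq_zero {R : Type*} [CommRing R] {v₁ v₂ w₁ w₂ : R}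
    (hv : IsCoprime v₁ v₂) (hcross : v₁ * w₂ - v₂ * w₁ = 0) :
    ∃ k, w₁ = k * v₁ ∧ w₂ = k * v₂ := by
  obtain ⟨x, y, hxy⟩ := hv
  exact ⟨x * w₁ + y * w₂, by linear_combination (-y) * hcross - w₁ * hxy,
    by linear_combination x * hcross - w₂ * hxy⟩

theorem mul_eq_or_eq_neg_of_sqNorm_eq {R : Type*} [CommRing R] [IsDomain R] {k v₁ v₂ : R}
    (hv : v₁ ^ 2 + v₂ ^ 2 ≠ 0) (hnorm : (k * v₁) ^ 2 + (k * v₂) ^ 2 = v₁ ^ 2 + v₂ ^ 2) :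
    (k * v₁, k * v₂) = (v₁, v₂) ∨ (k * v₁, k * v₂) = (-v₁, -v₂) := by
  have hk : k ^ 2 = 1 :=
    mul_right_cancel₀ hv (by linear_combination hnorm)
  rcases sq_eq_one_iff.mp hk with rfl | rfl <;> simp

theorem gcd_eq_one_of_minimal_of_sqNorm_lt_sq {p a b v₁ v₂ : ℤ} (hp : Prime p)
    (hv : p ∣ a * v₁ + b * v₂) (hpos : 0 < v₁ ^ 2 + v₂ ^ 2) (hsmall : v₁ ^ 2 + v₂ ^ 2 < p ^ 2)
    (hmin : ∀ w₁ w₂ : ℤ, p ∣ a * w₁ + b * w₂ → (w₁, w₂) ≠ (0, 0) →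
      v₁ ^ 2 + v₂ ^ 2 ≤ w₁ ^ 2 + w₂ ^ 2) :
    Int.gcd v₁ v₂ = 1 := by
  obtain ⟨u₁, hu₁⟩ := Int.gcd_dvd_left v₁ v₂
  obtain ⟨u₂, hu₂⟩ := Int.gcd_dvd_right v₁ v₂
  generalize hg : ((Int.gcd v₁ v₂ : ℕ) : ℤ) = g at hu₁ hu₂
  have hnorm : v₁ ^ 2 + v₂ ^ 2 = g ^ 2 * (u₁ ^ 2 + u₂ ^ 2) := by rw [hu₁, hu₂]; ring
  have hu_pos : 0 < u₁ ^ 2 + u₂ ^ 2 := pos_of_mul_pos_right (hnorm ▸ hpos) (sq_nonneg g)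
  have hg_sq : g ^ 2 ≤ v₁ ^ 2 + v₂ ^ 2 := by
    rw [hnorm]; exact le_mul_of_one_le_right (sq_nonneg g) hu_pos
  have hg_ne : g ≠ 0 := by rintro hg0; simp [hg0] at hnorm; omega
  have hpg : ¬ p ∣ g := fun h => hg_ne (Int.eq_zero_of_dvd_of_sq_lt_sq h (by omega))
  have hu : p ∣ a * u₁ + b * u₂ := by
    have h : a * v₁ + b * v₂ = g * (a * u₁ + b * u₂) := by rw [hu₁, hu₂]; ring
    exact (hp.dvd_or_dvd (h ▸ hv)).resolve_left hpg
  have hu_ne : (u₁, u₂) ≠ (0, 0) := by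
    rintro ⟨⟩; simp at hu_pos
  have hg_one : g ^ 2 ≤ 1 :=
    le_of_mul_le_mul_right (by linarith [hmin u₁ u₂ hu hu_ne]) hu_pos
  have hg_pos : 0 < g := (hg ▸ Int.natCast_nonneg _ : 0 ≤ g).lt_of_ne' hg_ne
  have : g = 1 := by nlinarith
  exact_mod_cast hg.trans this

/-- A shortest nonzero vector `v` of the congruence lattice
`{(x, y) : q ∣ a·x + b·y}` with `‖v‖² ≤ q/4` is primitive and is, up to sign, the
unique nonzero lattice vector of norm at most `‖v‖`. -/
theorem congruence_lattice_shortest_vector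
    (q : ℕ) (hq : q.Prime) (a b : ℤ) (hab : ¬ ((q : ℤ) ∣ a ∧ (q : ℤ) ∣ b))
    (v₁ v₂ : ℤ) (hv : (q : ℤ) ∣ a * v₁ + b * v₂)
    (hpos : 0 < v₁ ^ 2 + v₂ ^ 2) (hsmall : 4 * (v₁ ^ 2 + v₂ ^ 2) ≤ (q : ℤ))
    (hmin : ∀ w₁ w₂ : ℤ, (q : ℤ) ∣ a * w₁ + b * w₂ → (w₁, w₂) ≠ (0, 0) →
      v₁ ^ 2 + v₂ ^ 2 ≤ w₁ ^ 2 + w₂ ^ 2) :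
    Int.gcd v₁ v₂ = 1 ∧
    ∀ w₁ w₂ : ℤ, (q : ℤ) ∣ a * w₁ + b * w₂ → (w₁, w₂) ≠ (0, 0) →
      w₁ ^ 2 + w₂ ^ 2 ≤ v₁ ^ 2 + v₂ ^ 2 →
      (w₁, w₂) = (v₁, v₂) ∨ (w₁, w₂) = (-v₁, -v₂) := by
  have hq' : Prime (q : ℤ) := Nat.prime_iff_prime_int.mp hq
  have hq2 : (2 : ℤ) ≤ q := by exact_mod_cast hq.two_le
  have hgcd : Int.gcd v₁ v₂ = 1 := gcd_eq_one_of_minimal_of_sqNorm_lt_sq hq' hv hpos (by nlinarith) hmin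
  refine ⟨hgcd, fun w₁ w₂ hw hw0 hle => ?_⟩
  have hcross : v₁ * w₂ - v₂ * w₁ = 0 :=
    Int.eq_zero_of_dvd_of_sq_lt_sq (hq'.dvd_cross_of_dvd_dot hab hv hw)
      ((sq_cross_le_mul_sqNorm v₁ v₂ w₁ w₂).trans_lt (by nlinarith))
  obtain ⟨k, rfl, rfl⟩ :=
    (Int.isCoprime_iff_gcd_eq_one.mpr hgcd).exists_eq_mul_of_cross_eq_zero hcross
  exact mul_eq_or_eq_neg_of_sqNorm_eq hpos.ne' (le_antisymm hle (hmin _ _ hw hw0))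
end

section
/- Let q be a prime. Work in the quaternion algebra H over the field ZMod q, with basis 1, i, j, k satisfying i² = j² = k² = −1, i·j = k = −j·i. Let A, B, C, D, x, y, z ∈ ZMod q and let λ ∈ ZMod q be a unit such that λ·(A + B·i + C·j + D·k) = (1 + x·i)·(1 + y·j)·(1 + z·k). Then (A·D − B·C)·z² + (A² + B² − C² − D²)·z + (B·C − A·D) = 0. -/
open scoped Quaternion

/-!
Write `p = a + b i + c j + d k` and set `ijDet p = a d - b c`. This quadratic form vanishes on
every product `(a + b i)(c + d j) = a c + b c i + a d j + b d k`. Multiplying the hypothesis on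
the right by the conjugate `1 - z k` turns the right-hand side into `(1 + z²)(1 + x i)(1 + y j)`,
so `ijDet (λ (A + B i + C j + D k)(1 - z k)) = 0`; expanding, this is `-λ²` times the claimed
quadratic in `z`, and `λ` is a unit.
-/

namespace QuaternionAlgebra

variable {R : Type*} [CommRing R]

def ijDet {c₁ c₂ c₃ : R} (p : ℍ[R,c₁,c₂,c₃]) : R := p.re * p.imK - p.imI * p.imJ

theorem ijDet_smul {c₁ c₂ c₃ : R} (r : R) (p : ℍ[R,c₁,c₂,c₃]) :
    ijDet (r • p) = r ^ 2 * ijDet p := by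
  simp only [ijDet, re_smul, imI_smul, imJ_smul, imK_smul, smul_eq_mul]
  ring

theorem ijDet_mul_i_j {c₁ c₂ c₃ : R} (a b c d : R) :
    ijDet ((⟨a, b, 0, 0⟩ : ℍ[R,c₁,c₂,c₃]) * ⟨c, 0, d, 0⟩) = 0 := by
  simp only [ijDet, re_mul, imI_mul, imJ_mul, imK_mul]
  ring

theorem ijDet_mul_star_k (p : ℍ[R,-1,-1]) (z : R) :
    ijDet (p * star ⟨1, 0, 0, z⟩) =
      -((p.re * p.imK - p.imI * p.imJ) * z ^ 2 +
        (p.re ^ 2 + p.imI ^ 2 - p.imJ ^ 2 - p.imK ^ 2) * z + (p.imI * p.imJ - p.re * p.imK)) := by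
  simp only [ijDet, re_mul, imI_mul, imJ_mul, imK_mul, re_star, imI_star, imJ_star, imK_star]
  ring

end QuaternionAlgebra

open QuaternionAlgebra in
theorem quaternion_decomposition_necessary_general
    (q : ℕ) (A B C D x y z lam : ZMod q) (hlam : IsUnit lam)
    (h : lam • (⟨A, B, C, D⟩ : ℍ[ZMod q]) =
      (⟨1, x, 0, 0⟩ : ℍ[ZMod q]) * (⟨1, 0, y, 0⟩ : ℍ[ZMod q]) * (⟨1, 0, 0, z⟩ : ℍ[ZMod q])) :
    (A * D - B * C) * z ^ 2 + (A ^ 2 + B ^ 2 - C ^ 2 - D ^ 2) * z + (B * C - A * D) = 0 := by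
  set K : ℍ[ZMod q,-1,-1] := ⟨1, 0, 0, z⟩
  have hconj : lam • ((⟨A, B, C, D⟩ : ℍ[ZMod q,-1,-1]) * star K) =
      (K * star K).re • ((⟨1, x, 0, 0⟩ : ℍ[ZMod q,-1,-1]) * ⟨1, 0, y, 0⟩) := by
    rw [← smul_mul_assoc, h, mul_assoc _ K, mul_star_eq_coe, mul_coe_eq_smul, re_coe]
  have hdet := congrArg ijDet hconj
  rw [ijDet_smul, ijDet_smul, ijDet_mul_i_j, ijDet_mul_star_k, mul_zero, mul_neg,
    neg_eq_zero] at hdet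
  exact (hlam.pow 2).mul_right_eq_zero.mp hdet

/-- If `λ·(A + Bi + Cj + Dk) = (1 + xi)(1 + yj)(1 + zk)` in the
Hamilton quaternions over `ZMod q` with `λ` a unit, then `z` satisfies the quadratic
equation `(AD − BC)z² + (A² + B² − C² − D²)z + (BC − AD) = 0`. -/
theorem quaternion_decomposition_necessary
    (q : ℕ) (hq : q.Prime) (A B C D x y z lam : ZMod q) (hlam : IsUnit lam)
    (h : lam • (⟨A, B, C, D⟩ : ℍ[ZMod q]) =
      (⟨1, x, 0, 0⟩ : ℍ[ZMod q]) * (⟨1, 0, y, 0⟩ : ℍ[ZMod q]) * (⟨1, 0, 0, z⟩ : ℍ[ZMod q])) :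
    (A * D - B * C) * z ^ 2 + (A ^ 2 + B ^ 2 - C ^ 2 - D ^ 2) * z + (B * C - A * D) = 0 :=
  quaternion_decomposition_necessary_general q A B C D x y z lam hlam h
end

section
/- Let q be a prime. Work in the quaternion algebra H over the field ZMod q, with basis 1, i, j, k satisfying i² = j² = k² = −1, i·j = k = −j·i. Let A, B, C, D, z ∈ ZMod q satisfy (A·D − B·C)·z² + (A² + B² − C² − D²)·z + (B·C − A·D) = 0, with A + D·z ≠ 0 and 1 + z² ≠ 0. Then there exist x, y ∈ ZMod q and a unit λ ∈ ZMod q such that λ·(A + B·i + C·j + D·k) = (1 + x·i)·(1 + y·j)·(1 + z·k). -/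
open scoped Quaternion

theorem Quaternion.mk_one_mul_mk_one_mul_mk_one {R : Type*} [CommRing R] (x y z : R) :
    (⟨1, x, 0, 0⟩ : ℍ[R]) * ⟨1, 0, y, 0⟩ * ⟨1, 0, 0, z⟩ =
      ⟨1 - x * y * z, x + y * z, y - x * z, x * y + z⟩ := by
  ext <;> simp <;> ring

/-- Matching the `i`- and `j`-components forces `x = λ (B - zC) / (1 + z²)` and
`y = λ (C + zB) / (1 + z²)`, and combining the real and `k`-components forces
`λ (A + Dz) = 1 + z²`; with these choices both of the latter reduce to the quadratic in `z`. -/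
theorem Quaternion.smul_mk_eq_mk_one_mul_mk_one_mul_mk_one {F : Type*} [Field F]
    (A B C D z : F)
    (hquad : (A * D - B * C) * z ^ 2 + (A ^ 2 + B ^ 2 - C ^ 2 - D ^ 2) * z
      + (B * C - A * D) = 0)
    (hAD : A + D * z ≠ 0) :
    ((1 + z ^ 2) / (A + D * z)) • (⟨A, B, C, D⟩ : ℍ[F]) =
      ⟨1, (B - z * C) / (A + D * z), 0, 0⟩ * ⟨1, 0, (C + z * B) / (A + D * z), 0⟩ *
        ⟨1, 0, 0, z⟩ := by
  have hAD' : A + z * D ≠ 0 := by rwa [mul_comm z D]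
  rw [mk_one_mul_mk_one_mul_mk_one, QuaternionAlgebra.smul_mk]
  ext <;> simp only [smul_eq_mul] <;> field_simp
  · linear_combination z * hquad
  · ring
  · ring
  · linear_combination -hquad

/-- If `z ∈ ZMod q` satisfies the quadratic equation
`(AD − BC)z² + (A² + B² − C² − D²)z + (BC − AD) = 0` with `A + Dz ≠ 0` and
`1 + z² ≠ 0`, then `A + Bi + Cj + Dk` is, up to a unit scalar, a product
`(1 + xi)(1 + yj)(1 + zk)` in the Hamilton quaternions over `ZMod q`. -/
theorem quaternion_decomposition_sufficient
    (q : ℕ) (hq : q.Prime) (A B C D z : ZMod q)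
    (hquad : (A * D - B * C) * z ^ 2 + (A ^ 2 + B ^ 2 - C ^ 2 - D ^ 2) * z
      + (B * C - A * D) = 0)
    (hAD : A + D * z ≠ 0) (hz : 1 + z ^ 2 ≠ 0) :
    ∃ (x y lam : ZMod q), IsUnit lam ∧
      lam • (⟨A, B, C, D⟩ : ℍ[ZMod q]) =
        (⟨1, x, 0, 0⟩ : ℍ[ZMod q]) * (⟨1, 0, y, 0⟩ : ℍ[ZMod q]) * (⟨1, 0, 0, z⟩ : ℍ[ZMod q]) := by
  have : Fact q.Prime := ⟨hq⟩
  exact ⟨_, _, _, isUnit_iff_ne_zero.2 (div_ne_zero hz hAD),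
    Quaternion.smul_mk_eq_mk_one_mul_mk_one_mul_mk_one A B C D z hquad hAD⟩
end

section
/- Let q be an odd prime, let t ≥ 1 and d ≥ 1 be integers, let a₁, …, a_d be integers, and let m, N be positive integers with q ∤ m, 3·m ≤ q^{2t} and 3·N < q^{2t}. Then: (1) every (X₁, …, X_{d+1}) ∈ ℤ^{d+1} with X₁² + ⋯ + X_d² + X_{d+1}² = m² + q^{2t}·N, X_i ≡ q^t·a_i (mod q^{t+1}) for 1 ≤ i ≤ d, and X_{d+1} ≡ m (mod q^{t+1}), satisfies X_{d+1} = m and q^t ∣ X_i for all i ≤ d, with the integers Y_i := X_i/q^t satisfying Y₁² + ⋯ + Y_d² = N and Y_i ≡ a_i (mod q); and (2) conversely, if (Y₁, …, Y_d) ∈ ℤ^d satisfies Y₁² + ⋯ + Y_d² = N and Y_i ≡ a_i (mod q) for all i, then X_i := q^t·Y_i and X_{d+1} := m give a solution of the former system. In particular, the system X₁² + ⋯ + X_{d+1}² = m² + q^{2t}·N with the above congruence conditions modulo q^{t+1} is solvable over ℤ if and only if Y₁² + ⋯ + Y_d² = N with Y_i ≡ a_i (mod q) is solvable over ℤ. 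-/
/-- Reduction step: representing `N` as a sum of `d` squares with
congruence conditions mod `q` is equivalent to representing `m² + q^{2t}·N` as a sum
of `d + 1` squares with congruence conditions mod `q^{t+1}`. -/
theorem sum_squares_congruence_induction_step
    (q : ℕ) (hq : q.Prime) (hodd : Odd q)
    (t d : ℕ) (ht : 1 ≤ t) (hd : 1 ≤ d)
    (a : Fin d → ℤ) (m N : ℤ) (hm : 0 < m) (hN : 0 < N)
    (hqm : ¬ (q : ℤ) ∣ m) (h3m : 3 * m ≤ (q : ℤ) ^ (2 * t))
    (h3N : 3 * N < (q : ℤ) ^ (2 * t)) :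
    (∀ (X : Fin d → ℤ) (Xlast : ℤ),
        (∑ i, X i ^ 2) + Xlast ^ 2 = m ^ 2 + (q : ℤ) ^ (2 * t) * N →
        (∀ i, (q : ℤ) ^ (t + 1) ∣ X i - (q : ℤ) ^ t * a i) →
        (q : ℤ) ^ (t + 1) ∣ Xlast - m →
        Xlast = m ∧ (∀ i, (q : ℤ) ^ t ∣ X i) ∧
          ∃ Y : Fin d → ℤ, (∀ i, X i = (q : ℤ) ^ t * Y i) ∧
            (∑ i, Y i ^ 2) = N ∧ ∀ i, (q : ℤ) ∣ Y i - a i) ∧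
    (∀ Y : Fin d → ℤ, (∑ i, Y i ^ 2) = N → (∀ i, (q : ℤ) ∣ Y i - a i) →
        (∑ i, ((q : ℤ) ^ t * Y i) ^ 2) + m ^ 2 = m ^ 2 + (q : ℤ) ^ (2 * t) * N ∧
        (∀ i, (q : ℤ) ^ (t + 1) ∣ (q : ℤ) ^ t * Y i - (q : ℤ) ^ t * a i) ∧
        (q : ℤ) ^ (t + 1) ∣ m - m) ∧
    ((∃ (X : Fin d → ℤ) (Xlast : ℤ),
        (∑ i, X i ^ 2) + Xlast ^ 2 = m ^ 2 + (q : ℤ) ^ (2 * t) * N ∧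
        (∀ i, (q : ℤ) ^ (t + 1) ∣ X i - (q : ℤ) ^ t * a i) ∧
        (q : ℤ) ^ (t + 1) ∣ Xlast - m) ↔
      ∃ Y : Fin d → ℤ, (∑ i, Y i ^ 2) = N ∧ ∀ i, (q : ℤ) ∣ Y i - a i) := by
  have hq0 : (0 : ℤ) < (q : ℤ) := by exact_mod_cast hq.pos
  have hqZ : Prime (q : ℤ) := Nat.prime_iff_prime_int.mp hq
  have hQpos : (0 : ℤ) < (q : ℤ) ^ (2 * t) := pow_pos hq0 _
  set Q : ℤ := (q : ℤ) ^ (2 * t) with hQdef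
  have hqt0 : ((q : ℤ) ^ t) ≠ 0 := pow_ne_zero _ (ne_of_gt hq0)
  have hQeq : Q = (q : ℤ) ^ t * (q : ℤ) ^ t := by
    rw [hQdef, ← pow_add]; ring_nf
  have key1 : ∀ (X : Fin d → ℤ) (Xlast : ℤ),
      (∑ i, X i ^ 2) + Xlast ^ 2 = m ^ 2 + Q * N →
      (∀ i, (q : ℤ) ^ (t + 1) ∣ X i - (q : ℤ) ^ t * a i) →
      (q : ℤ) ^ (t + 1) ∣ Xlast - m →
      Xlast = m ∧ (∀ i, (q : ℤ) ^ t ∣ X i) ∧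
        ∃ Y : Fin d → ℤ, (∀ i, X i = (q : ℤ) ^ t * Y i) ∧
          (∑ i, Y i ^ 2) = N ∧ ∀ i, (q : ℤ) ∣ Y i - a i := by
    intro X Xlast hsum hXcong hlast
    -- each X i is divisible by q^t
    have hdvdX : ∀ i, (q : ℤ) ^ t ∣ X i := by
      intro i
      have h1 : (q : ℤ) ^ t ∣ X i - (q : ℤ) ^ t * a i :=
        dvd_trans (pow_dvd_pow _ (Nat.le_succ t)) (hXcong i)
      have h2 : (q : ℤ) ^ t ∣ (q : ℤ) ^ t * a i := Dvd.intro _ rfl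
      have := dvd_add h1 h2
      simpa using this
    -- Q divides Xlast^2 - m^2
    have hsq_nonneg : (0 : ℤ) ≤ ∑ i, X i ^ 2 :=
      Finset.sum_nonneg fun i _ => sq_nonneg _
    have hQdvd_sum : Q ∣ ∑ i, X i ^ 2 := by
      apply Finset.dvd_sum
      intro i _
      obtain ⟨z, hz⟩ := hdvdX i
      exact ⟨z ^ 2, by rw [hz, hQeq]; ring⟩
    have hQdvd : Q ∣ Xlast ^ 2 - m ^ 2 := by
      obtain ⟨s, hs⟩ := hQdvd_sum
      exact ⟨N - s, by linarith [hsum, hs.symm]⟩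
    -- q does not divide Xlast + m
    have hqXm : ¬ (q : ℤ) ∣ Xlast + m := by
      intro hdvd
      have hq1 : (q : ℤ) ∣ Xlast - m :=
        dvd_trans (dvd_pow_self _ (Nat.succ_ne_zero t)) hlast
      have : (q : ℤ) ∣ 2 * m := by
        have := dvd_sub hdvd hq1
        simpa [two_mul] using this
      rcases hqZ.dvd_mul.mp this with h | h
      · have h2 : q ∣ 2 := by exact_mod_cast h
        have : q = 2 := (Nat.prime_dvd_prime_iff_eq hq Nat.prime_two).mp h2
        rw [this] at hodd
        exact (by norm_num : ¬ Odd 2) hodd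
      · exact hqm h
    -- hence Q divides Xlast - m
    have hcop : IsCoprime ((q : ℤ)) (Xlast + m) :=
      (hqZ.coprime_iff_not_dvd).mpr hqXm
    have hQdvd' : Q ∣ Xlast - m := by
      have hfac : Xlast ^ 2 - m ^ 2 = (Xlast - m) * (Xlast + m) := by ring
      rw [hfac] at hQdvd
      exact hcop.pow_left.dvd_of_dvd_mul_right hQdvd
    obtain ⟨k, hk⟩ := hQdvd'
    -- size argument: k = 0
    have hXlast2 : Xlast ^ 2 ≤ m ^ 2 + Q * N := by linarith [hsum, hsq_nonneg]
    have hk0 : k = 0 := by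
      by_contra hk0
      have hk1 : 1 ≤ k ^ 2 := by
        have : 1 ≤ |k| := Int.one_le_abs (by omega)
        nlinarith [abs_nonneg k, sq_abs k]
      have hXeq : Xlast = m + Q * k := by linarith [hk]
      have hexp : 2 * m * k + Q * k ^ 2 ≤ N := by
        have : (m + Q * k) ^ 2 ≤ m ^ 2 + Q * N := by rw [← hXeq]; exact hXlast2
        nlinarith [hQpos]
      have hkk : (0 : ℤ) ≤ k * (k + 1) := by
        rcases le_or_gt 0 k with h | h
        · nlinarith
        · nlinarith
      nlinarith [mul_nonneg (sub_nonneg.mpr (by linarith : 2 * m ≤ Q)) (by linarith : (0:ℤ) ≤ k ^ 2 - 1),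
        mul_nonneg (by linarith : (0:ℤ) ≤ 2 * m) hkk]
    have hXlast : Xlast = m := by rw [hk0, mul_zero] at hk; linarith
    refine ⟨hXlast, hdvdX, ?_⟩
    -- construct Y
    refine ⟨fun i => X i / (q : ℤ) ^ t, ?_, ?_, ?_⟩
    · intro i; exact (Int.mul_ediv_cancel' (hdvdX i)).symm
    · have hXY : ∀ i, X i = (q : ℤ) ^ t * (X i / (q : ℤ) ^ t) :=
        fun i => (Int.mul_ediv_cancel' (hdvdX i)).symm
      have hsum' : (∑ i, X i ^ 2) = Q * N := by
        rw [hXlast] at hsum; linarith [hsum]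
      have : Q * (∑ i, (X i / (q : ℤ) ^ t) ^ 2) = Q * N := by
        rw [← hsum', Finset.mul_sum]
        apply Finset.sum_congr rfl
        intro i _
        rw [hQeq, show X i ^ 2 = ((q:ℤ)^t * (X i / (q:ℤ)^t))^2 from by rw [← hXY i]]
        ring
      exact mul_left_cancel₀ (ne_of_gt hQpos) this
    · intro i
      set Yi := X i / (q : ℤ) ^ t with hYi
      have hXi : X i = (q : ℤ) ^ t * Yi := (Int.mul_ediv_cancel' (hdvdX i)).symm
      have h1 : (q : ℤ) ^ t * (q : ℤ) ∣ (q : ℤ) ^ t * (Yi - a i) := by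
        have : (q : ℤ) ^ t * (Yi - a i) = X i - (q : ℤ) ^ t * a i := by
          rw [hXi]; ring
        rw [this]
        have : (q : ℤ) ^ (t + 1) = (q : ℤ) ^ t * (q : ℤ) := by rw [pow_succ]
        rw [← this]
        exact hXcong i
      exact (mul_dvd_mul_iff_left hqt0).mp h1
  have key2 : ∀ Y : Fin d → ℤ, (∑ i, Y i ^ 2) = N → (∀ i, (q : ℤ) ∣ Y i - a i) →
      (∑ i, ((q : ℤ) ^ t * Y i) ^ 2) + m ^ 2 = m ^ 2 + Q * N ∧
      (∀ i, (q : ℤ) ^ (t + 1) ∣ (q : ℤ) ^ t * Y i - (q : ℤ) ^ t * a i) ∧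
      (q : ℤ) ^ (t + 1) ∣ m - m := by
    intro Y hsum hcong
    refine ⟨?_, ?_, by simp⟩
    · have : (∑ i, ((q : ℤ) ^ t * Y i) ^ 2) = Q * ∑ i, Y i ^ 2 := by
        rw [Finset.mul_sum]
        apply Finset.sum_congr rfl
        intro i _
        rw [hQeq]; ring
      rw [this, hsum]; ring
    · intro i
      obtain ⟨c, hc⟩ := hcong i
      exact ⟨c, by rw [pow_succ]; rw [sub_eq_iff_eq_add] at hc; rw [hc]; ring⟩
  refine ⟨key1, key2, ?_⟩
  constructor
  · rintro ⟨X, Xlast, h1, h2, h3⟩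
    obtain ⟨_, _, Y, _, hYsum, hYcong⟩ := key1 X Xlast h1 h2 h3
    exact ⟨Y, hYsum, hYcong⟩
  · rintro ⟨Y, hYsum, hYcong⟩
    obtain ⟨h1, h2, h3⟩ := key2 Y hYsum hYcong
    exact ⟨fun i => (q : ℤ) ^ t * Y i, m, h1, h2, h3⟩
end

section
/- Let q be a prime with q ≡ 3 (mod 4), and let g be a unit of the quotient ring ℤ[i]/(q) that generates its group of units. Let k ≥ 1 and T ≥ 1 be integers with 16·k·T < q, let t, t₁, …, t_k be natural numbers all at most T, and set s := (q − 1)·t + (t₁ + ⋯ + t_k). Let π₁, …, π_k ∈ ℤ[i] be such that the image of π_j in ℤ[i]/(q) equals g^{t_j} for each j. Let ε₁, …, ε_k ∈ {0, 1}, let u be a unit of ℤ[i], and suppose that the element α := u · ∏_{j=1}^{k} τ_j, where τ_j := π_j if ε_j = 0 and τ_j := conj(π_j) if ε_j = 1, has image g^s in ℤ[i]/(q). Then ∑_{j=1}^{k} ξ_j·t_j = s, where ξ_j := 1 if ε_j = 0 and ξ_j := q if ε_j = 1. -/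
set_option autoImplicit false
set_option maxHeartbeats 1000000

open Zsqrtd

private theorem aux_sqrtd_pow (q : ℕ) (hq3 : q % 4 = 3) :
    (sqrtd : GaussianInt) ^ q = -sqrtd := by
  obtain ⟨m, rfl⟩ : ∃ m, q = 4 * m + 3 := ⟨q / 4, by omega⟩
  have h2 : (sqrtd : GaussianInt) ^ 2 = -1 := by
    rw [pow_two, Zsqrtd.dmuld]; rfl
  have h3 : 4 * m + 3 = 2 * (2 * m + 1) + 1 := by ring
  rw [h3, pow_succ, pow_mul, h2, Odd.neg_one_pow ⟨m, by ring⟩, neg_one_mul]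

private theorem aux_unit_pow4 (z : GaussianInt) (h2 : z.re ^ 2 + z.im ^ 2 = 1) :
    z ^ 4 = 1 := by
  obtain ⟨a, b⟩ := z
  simp only at h2 ⊢
  have ha : -1 ≤ a ∧ a ≤ 1 := by constructor <;> nlinarith [sq_nonneg a, sq_nonneg b]
  have hb : -1 ≤ b ∧ b ≤ 1 := by constructor <;> nlinarith [sq_nonneg a, sq_nonneg b]
  obtain ⟨ha1, ha2⟩ := ha; obtain ⟨hb1, hb2⟩ := hb
  interval_cases a <;> interval_cases b <;> simp_all <;> decide

private theorem aux_star (q : ℕ) [hqf : Fact q.Prime] (hq3 : q % 4 = 3)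
    [CharP (GaussianInt ⧸ Ideal.span {(q : GaussianInt)}) q]
    (z : GaussianInt) :
    Ideal.Quotient.mk (Ideal.span {(q : GaussianInt)}) (star z) =
      (Ideal.Quotient.mk (Ideal.span {(q : GaussianInt)}) z) ^ q := by
  set I := Ideal.span {(q : GaussianInt)}
  set mkq := Ideal.Quotient.mk I with hmkq
  obtain ⟨a, b⟩ := z
  have hd : (⟨a, b⟩ : GaussianInt) = (a : GaussianInt) + sqrtd * (b : GaussianInt) :=
    Zsqrtd.decompose
  have hds : (star ⟨a, b⟩ : GaussianInt) = (a : GaussianInt) + sqrtd * ((-b : ℤ) : GaussianInt) := by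
    rw [Zsqrtd.star_mk]; exact Zsqrtd.decompose
  rw [hds, hd]
  have hcast : ∀ c : ℤ, (mkq (c : GaussianInt)) ^ q = mkq (c : GaussianInt) := by
    intro c
    have : mkq (c : GaussianInt) = (c : GaussianInt ⧸ I) := map_intCast mkq c
    rw [this, ← map_intCast (ZMod.castHom (dvd_refl q) (GaussianInt ⧸ I)) c,
      ← map_pow, ZMod.pow_card]
  have key : (mkq ((a : GaussianInt) + sqrtd * (b : GaussianInt))) ^ q
      = mkq a + mkq sqrtd ^ q * mkq b := by
    rw [map_add, add_pow_char, map_mul, mul_pow, hcast a, hcast b]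
  rw [key, ← map_pow, aux_sqrtd_pow q hq3]
  simp only [map_add, map_mul, map_neg, Int.cast_neg]
  ring

private theorem aux_card (q : ℕ) [hqf : Fact q.Prime] :
    Nat.card (GaussianInt ⧸ Ideal.span {(q : GaussianInt)}) = q * q := by
  set I := Ideal.span {(q : GaussianInt)} with hI
  set mkq := Ideal.Quotient.mk I with hmkq
  haveI : NeZero q := ⟨hqf.out.ne_zero⟩
  have hcastq : ((q : ℤ) : GaussianInt) = (q : GaussianInt) := by push_cast; rfl
  have hbij : Function.Bijective
      (fun p : ZMod q × ZMod q => mkq ⟨(p.1.val : ℤ), (p.2.val : ℤ)⟩) := by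
    constructor
    · rintro ⟨a, b⟩ ⟨a', b'⟩ h
      rw [hmkq, Ideal.Quotient.eq, hI, Ideal.mem_span_singleton, ← hcastq,
        Zsqrtd.intCast_dvd] at h
      obtain ⟨h1, h2⟩ := h
      simp only [Zsqrtd.re_sub, Zsqrtd.im_sub] at h1 h2
      have ha := ZMod.val_lt a; have ha' := ZMod.val_lt a'
      have hb := ZMod.val_lt b; have hb' := ZMod.val_lt b'
      have e1 : a.val = a'.val := by
        have := Int.eq_zero_of_abs_lt_dvd h1 (Int.abs_sub_lt_of_lt_lt ha' ha)
        omega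
      have e2 : b.val = b'.val := by
        have := Int.eq_zero_of_abs_lt_dvd h2 (Int.abs_sub_lt_of_lt_lt hb' hb)
        omega
      exact Prod.ext (ZMod.val_injective q e1) (ZMod.val_injective q e2)
    · intro x
      obtain ⟨z, rfl⟩ := Ideal.Quotient.mk_surjective x
      refine ⟨⟨(z.re : ZMod q), (z.im : ZMod q)⟩, ?_⟩
      simp only
      rw [Ideal.Quotient.eq, hI, Ideal.mem_span_singleton, ← hcastq,
        Zsqrtd.intCast_dvd]
      constructor
      · show (q : ℤ) ∣ ((((z.re : ZMod q)).val : ℤ) - z.re)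
        rw [← ZMod.intCast_zmod_eq_zero_iff_dvd]
        push_cast
        simp [ZMod.natCast_val, ZMod.cast_id]
      · show (q : ℤ) ∣ ((((z.im : ZMod q)).val : ℤ) - z.im)
        rw [← ZMod.intCast_zmod_eq_zero_iff_dvd]
        push_cast
        simp [ZMod.natCast_val, ZMod.cast_id]
  rw [← Nat.card_congr (Equiv.ofBijective _ hbij), Nat.card_prod, Nat.card_zmod]

/-- Soundness of the subset-sum reduction: if the product
`u · ∏ τ_j` (with `τ_j = π_j` or `conj(π_j)`) has image `g^s` in `ℤ[i]/(q)`,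
where `g` is a primitive root, `π_j ≡ g^{t_j}`, `s = (q−1)t + ∑ t_j`, and
`16·k·T < q` with all of `t, t_j ≤ T`, then `∑ ξ_j·t_j = s` with `ξ_j ∈ {1, q}`. -/
theorem subset_sum_reduction_soundness
    (q : ℕ) (hq : q.Prime) (hq3 : q % 4 = 3)
    (g : (GaussianInt ⧸ Ideal.span {(q : GaussianInt)})ˣ)
    (hg : ∀ u : (GaussianInt ⧸ Ideal.span {(q : GaussianInt)})ˣ,
      u ∈ Subgroup.zpowers g)
    (k T : ℕ) (hk : 1 ≤ k) (hT : 1 ≤ T) (hkT : 16 * k * T < q)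
    (t : ℕ) (tj : Fin k → ℕ) (ht : t ≤ T) (htj : ∀ j, tj j ≤ T)
    (s : ℕ) (hs : s = (q - 1) * t + ∑ j, tj j)
    (π : Fin k → GaussianInt)
    (hπ : ∀ j, Ideal.Quotient.mk (Ideal.span {(q : GaussianInt)}) (π j) =
      (g : GaussianInt ⧸ Ideal.span {(q : GaussianInt)}) ^ tj j)
    (ε : Fin k → Bool) (u : GaussianIntˣ)
    (hα : Ideal.Quotient.mk (Ideal.span {(q : GaussianInt)})
        ((u : GaussianInt) * ∏ j, (if ε j then star (π j) else π j)) =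
      (g : GaussianInt ⧸ Ideal.span {(q : GaussianInt)}) ^ s) :
    ∑ j, (if ε j then q else 1) * tj j = s := by
  haveI : Fact q.Prime := ⟨hq⟩
  have hqp : Prime ((q : ℕ) : GaussianInt) :=
    GaussianInt.prime_of_nat_prime_of_mod_four_eq_three q hq3
  haveI hmax : (Ideal.span {(q : GaussianInt)}).IsMaximal :=
    PrincipalIdealRing.isMaximal_of_irreducible hqp.irreducible
  set mkq := Ideal.Quotient.mk (Ideal.span {(q : GaussianInt)}) with hmkq
  letI : Field (GaussianInt ⧸ Ideal.span {(q : GaussianInt)}) := Ideal.Quotient.field _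
  haveI : Nontrivial (GaussianInt ⧸ Ideal.span {(q : GaussianInt)}) :=
    Ideal.Quotient.nontrivial_iff.mpr hmax.ne_top
  haveI : CharP (GaussianInt ⧸ Ideal.span {(q : GaussianInt)}) q := (CharP.charP_iff_prime_eq_zero hq).mpr (by
    rw [← map_natCast mkq q]
    exact Ideal.Quotient.eq_zero_iff_mem.mpr (Ideal.mem_span_singleton_self _))
  set L := ∑ j, (if ε j then q else 1) * tj j with hL
  -- product image
  have hτ : ∀ j, mkq (if ε j then star (π j) else π j) =
      (g : GaussianInt ⧸ Ideal.span {(q : GaussianInt)}) ^ ((if ε j then q else 1) * tj j) := by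
    intro j
    cases hε : ε j
    · simp only [if_neg Bool.false_ne_true, Bool.false_eq_true, if_false, one_mul]
      exact hπ j
    · simp only [if_pos, if_true]
      rw [aux_star q hq3 (π j), hπ j, ← pow_mul']
  have hprod : mkq (∏ j, (if ε j then star (π j) else π j)) = (g : GaussianInt ⧸ Ideal.span {(q : GaussianInt)}) ^ L := by
    rw [map_prod, Finset.prod_congr rfl (fun j _ => hτ j), Finset.prod_pow_eq_pow_sum]
  -- u^4 = 1
  have hu4 : (u : GaussianInt) ^ 4 = 1 := by
    apply aux_unit_pow4
    have h1 : ((u : GaussianInt).norm).natAbs = 1 := Zsqrtd.norm_eq_one_iff.mpr u.isUnit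
    have h2 := Zsqrtd.norm_def (u : GaussianInt)
    have h3 : (u : GaussianInt).norm =
        (u : GaussianInt).re ^ 2 + (u : GaussianInt).im ^ 2 := by rw [h2]; ring
    have hnn : 0 ≤ (u : GaussianInt).norm := by rw [h3]; positivity
    have h4 : (u : GaussianInt).norm = 1 := by omega
    rw [h3] at h4
    exact h4
  -- units
  set v : (GaussianInt ⧸ Ideal.span {(q : GaussianInt)})ˣ := Units.map (mkq : GaussianInt →+* GaussianInt ⧸ Ideal.span {(q : GaussianInt)}).toMonoidHom u
    with hv
  have hvcoe : (v : GaussianInt ⧸ Ideal.span {(q : GaussianInt)}) = mkq (u : GaussianInt) := rfl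
  have hv4 : v ^ 4 = 1 := by
    ext
    rw [Units.val_pow_eq_pow_val, hvcoe, ← map_pow, hu4, map_one, Units.val_one]
  have hU : v * g ^ L = g ^ s := by
    ext
    rw [Units.val_mul, Units.val_pow_eq_pow_val, Units.val_pow_eq_pow_val, hvcoe,
      ← hprod, ← map_mul]
    exact hα
  have hg4 : g ^ (4 * L) = g ^ (4 * s) := by
    have h := congrArg (· ^ 4) hU
    simp only [mul_pow, hv4, one_mul, ← pow_mul] at h
    rw [mul_comm L 4, mul_comm s 4] at h
    exact h
  have hmod : 4 * L ≡ 4 * s [MOD orderOf g] := pow_eq_pow_iff_modEq.mp hg4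
  have hord : orderOf g = q * q - 1 := by
    have hcu : Nat.card (GaussianInt ⧸ Ideal.span {(q : GaussianInt)})ˣ =
        Nat.card (GaussianInt ⧸ Ideal.span {(q : GaussianInt)}) - 1 :=
      Nat.card_units (GaussianInt ⧸ Ideal.span {(q : GaussianInt)})
    rw [orderOf_eq_card_of_forall_mem_zpowers hg, hcu, aux_card q]
  -- bounds
  have hkT1 : 1 ≤ k * T := Nat.mul_le_mul hk hT
  have hq2 : 3 ≤ q := by have := hq.two_le; omega
  have hLb : L ≤ q * (k * T) := by
    calc L ≤ ∑ _j : Fin k, q * T := by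
          apply Finset.sum_le_sum
          intro j _
          cases hε : ε j
          · simp only [Bool.false_eq_true, if_false, one_mul]
            exact le_trans (htj j) (Nat.le_mul_of_pos_left T (by omega))
          · simp only [if_true]
            exact Nat.mul_le_mul_left q (htj j)
      _ = k * (q * T) := by simp [Finset.sum_const, Finset.card_univ, mul_comm]
      _ = q * (k * T) := by ring
  have hsb : s ≤ q * T + k * T := by
    rw [hs]
    have h1 : (q - 1) * t ≤ q * T := Nat.mul_le_mul (Nat.sub_le q 1) ht
    have h2 : (∑ j, tj j) ≤ k * T := by
      calc (∑ j, tj j) ≤ ∑ _j : Fin k, T := Finset.sum_le_sum (fun j _ => htj j)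
        _ = k * T := by simp [Finset.sum_const, Finset.card_univ, mul_comm]
    omega
  have hmul : q * (16 * (k * T)) ≤ q * q :=
    Nat.mul_le_mul_left q (by nlinarith [hkT])
  have hTle : T ≤ k * T := Nat.le_mul_of_pos_left T (by omega)
  have h4L : 4 * L + 1 < q * q := by nlinarith [hmul, hLb, hkT1, hq2]
  have h4s : 4 * s + 1 < q * q := by nlinarith [hmul, hsb, hTle, hkT1, hq2]
  have heq : 4 * L = 4 * s := by
    rw [hord] at hmod
    exact hmod.eq_of_lt_of_lt (by omega) (by omega)
  omega
end
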